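/- arXiv:2407.16621 — 6 statements merged into one kernel-verified Lean document; each statement's English description precedes it below -/
import Mathlib

section
/- Let 0 ≤ T_* < T^* and let k : ℝ → ℝ be differentiable on the interval [T_*², (T^*)²] with k(s) + 2·s·k′(s) ≥ c₂ for every s ∈ [T_*², (T^*)²], where c₂ > 0. Then for all T, T̃ ∈ [T_*, T^*] one has (k(T²)·T − k(T̃²)·T̃)·(T − T̃) ≥ c₂·(T − T̃)². In particular the strong-monotonicity inequality (1.4) of the paper holds with C̃ = c₂. -/
/-!
With `φ(t) = k(t²)·t`, the hypothesis on `k` says exactly that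
`φ'(t) = k(t²) + 2t²k'(t²) ≥ c₂` on `[T_*, T^*]` (squaring maps this interval into
`[T_*², (T^*)²]` because `T_* ≥ 0`). By the mean value theorem `φ(T) - φ(T̃)` then has the sign
of `T - T̃` and modulus at least `c₂·|T - T̃|`.
-/

open Set

theorem Convex.mul_sq_le_image_sub_mul_sub_of_le_deriv {D : Set ℝ} (hD : Convex ℝ D)
    {f : ℝ → ℝ} (hf : ContinuousOn f D) (hf' : DifferentiableOn ℝ f (interior D)) {C : ℝ}
    (hf'_ge : ∀ x ∈ interior D, C ≤ deriv f x) {x y : ℝ} (hx : x ∈ D) (hy : y ∈ D) :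
    C * (x - y) ^ 2 ≤ (f x - f y) * (x - y) := by
  have growth := hD.mul_sub_le_image_sub_of_le_deriv hf hf' hf'_ge
  rcases le_total y x with hyx | hxy
  · nlinarith [growth y hy x hx hyx, sub_nonneg.2 hyx]
  · nlinarith [growth x hx y hy hxy, sub_nonneg.2 hxy]

theorem hasDerivAt_comp_sq_mul_id {k : ℝ → ℝ} {t : ℝ}
    (hk : DifferentiableAt ℝ k (t ^ 2)) :
    HasDerivAt (fun t => k (t ^ 2) * t) (k (t ^ 2) + 2 * t ^ 2 * deriv k (t ^ 2)) t := by
  have hk_sq := hk.hasDerivAt.comp_of_eq t (hasDerivAt_pow 2 t) rfl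
  refine (hk_sq.mul (hasDerivAt_id t)).congr_deriv ?_
  simp only [Function.comp_apply, id_eq, Nat.cast_ofNat]
  ring

theorem mapsTo_sq_Icc {a b : ℝ} (ha : 0 ≤ a) :
    MapsTo (· ^ 2) (Icc a b) (Icc (a ^ 2) (b ^ 2)) :=
  fun _ ht => ⟨pow_le_pow_left₀ ha ht.1 2, pow_le_pow_left₀ (ha.trans ht.1) ht.2 2⟩

theorem strong_monotonicity_of_plasticity_general
    (Tstar Tsup c₂ : ℝ) (hTstar : 0 ≤ Tstar)
    (k : ℝ → ℝ)
    (hdiff : ∀ s ∈ Set.Icc (Tstar ^ 2) (Tsup ^ 2), DifferentiableAt ℝ k s)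
    (hell : ∀ s ∈ Set.Icc (Tstar ^ 2) (Tsup ^ 2), c₂ ≤ k s + 2 * s * deriv k s) :
    ∀ T ∈ Set.Icc Tstar Tsup, ∀ T' ∈ Set.Icc Tstar Tsup,
      (k (T ^ 2) * T - k (T' ^ 2) * T') * (T - T') ≥ c₂ * (T - T') ^ 2 := by
  intro T hT T' hT'
  have hderiv : ∀ t ∈ Icc Tstar Tsup,
      HasDerivAt (fun t => k (t ^ 2) * t) (k (t ^ 2) + 2 * t ^ 2 * deriv k (t ^ 2)) t :=
    fun t ht => hasDerivAt_comp_sq_mul_id (hdiff _ (mapsTo_sq_Icc hTstar ht))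
  refine (convex_Icc Tstar Tsup).mul_sq_le_image_sub_mul_sub_of_le_deriv
    (fun t ht => (hderiv t ht).continuousAt.continuousWithinAt)
    (fun t ht => (hderiv t (interior_subset ht)).differentiableAt.differentiableWithinAt)
    (fun t ht => ?_) hT hT'
  rw [(hderiv t (interior_subset ht)).deriv]
  exact hell _ (mapsTo_sq_Icc hTstar (interior_subset ht))

/-- Strong monotonicity of the plasticity nonlinearity: if `k` is differentiable on
`[T_*², (T^*)²]` and `k(s) + 2·s·k′(s) ≥ c₂ > 0` there, then
`(k(T²)·T − k(T̃²)·T̃)·(T − T̃) ≥ c₂·(T − T̃)²` for all `T, T̃ ∈ [T_*, T^*]`. -/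
theorem strong_monotonicity_of_plasticity
    (Tstar Tsup c₂ : ℝ) (hTstar : 0 ≤ Tstar) (hlt : Tstar < Tsup)
    (k : ℝ → ℝ)
    (hdiff : ∀ s ∈ Set.Icc (Tstar ^ 2) (Tsup ^ 2), DifferentiableAt ℝ k s)
    (hc₂ : 0 < c₂)
    (hell : ∀ s ∈ Set.Icc (Tstar ^ 2) (Tsup ^ 2), c₂ ≤ k s + 2 * s * deriv k s) :
    ∀ T ∈ Set.Icc Tstar Tsup, ∀ T' ∈ Set.Icc Tstar Tsup,
      (k (T ^ 2) * T - k (T' ^ 2) * T') * (T - T') ≥ c₂ * (T - T') ^ 2 :=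
  strong_monotonicity_of_plasticity_general Tstar Tsup c₂ hTstar k hdiff hell
end

section
/- Let G > 0, T₀ > 0 and κ ∈ (0,1), and let k be the Ramberg–Osgood plasticity function. Then for every s > T₀² the function k is differentiable at s and satisfies k(s) + 2·s·k′(s) = (κ/G)·(s/T₀²)^{(κ−1)/2}; consequently, for every S ≥ T₀² and every s ∈ (T₀², S], one has k(s) + 2·s·k′(s) ≥ (κ/G)·(S/T₀²)^{(κ−1)/2} > 0. -/
noncomputable def rambergOsgood (G T₀ κ : ℝ) : ℝ → ℝ :=
  fun s => if s ≤ T₀ ^ 2 then 1 / G else (1 / G) * (s / T₀ ^ 2) ^ ((κ - 1) / 2)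

lemma rambergOsgood_hasDerivAt (G T₀ κ : ℝ) (hT₀ : 0 < T₀) {s : ℝ} (hs : T₀ ^ 2 < s) :
    HasDerivAt (rambergOsgood G T₀ κ)
      ((1 / G) * (((κ - 1) / 2) * (s / T₀ ^ 2) ^ ((κ - 1) / 2 - 1) * (1 / T₀ ^ 2))) s := by
  have hc : (0:ℝ) < T₀ ^ 2 := by positivity
  have hsc : 0 < s / T₀ ^ 2 := div_pos (hc.trans hs) hc
  have h1 : HasDerivAt (fun t : ℝ => t / T₀ ^ 2) (1 / T₀ ^ 2) s := by
    simpa using (hasDerivAt_id s).div_const (T₀ ^ 2)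
  have h2 := (Real.hasDerivAt_rpow_const (x := s / T₀ ^ 2) (p := (κ - 1) / 2)
    (Or.inl hsc.ne')).comp s h1
  have h3 := h2.const_mul (1 / G)
  refine (h3.congr_of_eventuallyEq ?_)
  filter_upwards [Ioi_mem_nhds hs] with t ht
  simp [rambergOsgood, not_le.mpr (Set.mem_Ioi.mp ht), Function.comp]

/-- For `s > T₀²` the Ramberg–Osgood function is differentiable with
`k(s) + 2·s·k′(s) = (κ/G)·(s/T₀²)^((κ−1)/2)`; consequently on `(T₀², S]` (for any
`S ≥ T₀²`) one has `k(s) + 2·s·k′(s) ≥ (κ/G)·(S/T₀²)^((κ−1)/2) > 0`. -/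
theorem rambergOsgood_ellipticity (G T₀ κ : ℝ) (hG : 0 < G) (hT₀ : 0 < T₀)
    (hκ : κ ∈ Set.Ioo (0 : ℝ) 1) :
    (∀ s, T₀ ^ 2 < s →
      DifferentiableAt ℝ (rambergOsgood G T₀ κ) s ∧
      rambergOsgood G T₀ κ s + 2 * s * deriv (rambergOsgood G T₀ κ) s
        = (κ / G) * (s / T₀ ^ 2) ^ ((κ - 1) / 2)) ∧
    ∀ S, T₀ ^ 2 ≤ S → ∀ s ∈ Set.Ioc (T₀ ^ 2) S,
      (κ / G) * (S / T₀ ^ 2) ^ ((κ - 1) / 2)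
        ≤ rambergOsgood G T₀ κ s + 2 * s * deriv (rambergOsgood G T₀ κ) s ∧
      0 < (κ / G) * (S / T₀ ^ 2) ^ ((κ - 1) / 2) := by
  have hc : (0:ℝ) < T₀ ^ 2 := by positivity
  have key : ∀ s, T₀ ^ 2 < s →
      DifferentiableAt ℝ (rambergOsgood G T₀ κ) s ∧
      rambergOsgood G T₀ κ s + 2 * s * deriv (rambergOsgood G T₀ κ) s
        = (κ / G) * (s / T₀ ^ 2) ^ ((κ - 1) / 2) := by
    intro s hs
    have hd := rambergOsgood_hasDerivAt G T₀ κ hT₀ hs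
    refine ⟨hd.differentiableAt, ?_⟩
    rw [hd.deriv]
    have hsc : 0 < s / T₀ ^ 2 := div_pos (hc.trans hs) hc
    have hval : rambergOsgood G T₀ κ s = (1 / G) * (s / T₀ ^ 2) ^ ((κ - 1) / 2) := by
      simp [rambergOsgood, not_le.mpr hs]
    have hsplit : (s / T₀ ^ 2) ^ ((κ - 1) / 2)
        = (s / T₀ ^ 2) ^ ((κ - 1) / 2 - 1) * (s / T₀ ^ 2) := by
      rw [← Real.rpow_add_one hsc.ne']
      ring_nf
    rw [hval, hsplit]
    have hs0 : s ≠ 0 := (hc.trans hs).ne'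
    field_simp
    ring
  refine ⟨key, fun S hS s hsmem => ?_⟩
  obtain ⟨hs1, hs2⟩ := hsmem
  have hsc : 0 < s / T₀ ^ 2 := div_pos (hc.trans hs1) hc
  have hpos : 0 < (κ / G) * (S / T₀ ^ 2) ^ ((κ - 1) / 2) := by
    have : 0 < S / T₀ ^ 2 := div_pos (hc.trans_le hS) hc
    exact mul_pos (div_pos hκ.1 hG) (Real.rpow_pos_of_pos this _)
  refine ⟨?_, hpos⟩
  rw [(key s hs1).2]
  have hmono : (S / T₀ ^ 2) ^ ((κ - 1) / 2) ≤ (s / T₀ ^ 2) ^ ((κ - 1) / 2) :=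
    Real.rpow_le_rpow_of_nonpos hsc (by gcongr)
      (by linarith [hκ.2])
  exact mul_le_mul_of_nonneg_left hmono (div_pos hκ.1 hG).le
end

section
/- Let G > 0, T₀ > 0, κ ∈ (0,1), let k be the Ramberg–Osgood plasticity function, and let T* ≥ T₀. Then for all T, S ∈ [0, T*] one has (k(T²)·T − k(S²)·S)·(T − S) ≥ (κ/G)·(T*/T₀)^{κ−1}·(T − S)². -/
open Real Set

lemma ramberg_rpow_gap {κ : ℝ} (hκ0 : 0 < κ) (hκ1 : κ < 1) {M s t : ℝ}
    (hs : 0 < s) (hst : s ≤ t) (htM : t ≤ M) :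
    κ * M ^ (κ - 1) * (t - s) ≤ t ^ κ - s ^ κ := by
  set ψ : ℝ → ℝ := fun x => x ^ κ - κ * M ^ (κ - 1) * x with hψ
  have hmono : MonotoneOn ψ (Icc s t) := by
    apply monotoneOn_of_deriv_nonneg (convex_Icc s t)
    · apply ContinuousOn.sub
      · intro x hx
        exact (Real.continuousAt_rpow_const x κ
          (Or.inl (lt_of_lt_of_le hs hx.1).ne')).continuousWithinAt
      · exact (continuous_const.mul continuous_id).continuousOn
    · intro x hx
      rw [interior_Icc] at hx
      have hx0 : 0 < x := lt_of_lt_of_le hs hx.1.le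
      have h1 : HasDerivAt ψ (κ * x ^ (κ - 1) - κ * M ^ (κ - 1)) x := by
        have := (Real.hasDerivAt_rpow_const (p := κ) (Or.inl hx0.ne')).sub
          (((hasDerivAt_id x).const_mul (κ * M ^ (κ - 1))))
        exact this.congr_deriv (by ring)
      exact h1.differentiableAt.differentiableWithinAt
    · intro x hx
      rw [interior_Icc] at hx
      have hx0 : 0 < x := lt_of_lt_of_le hs hx.1.le
      have h1 : HasDerivAt ψ (κ * x ^ (κ - 1) - κ * M ^ (κ - 1)) x := by
        have := (Real.hasDerivAt_rpow_const (p := κ) (Or.inl hx0.ne')).sub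
          (((hasDerivAt_id x).const_mul (κ * M ^ (κ - 1))))
        exact this.congr_deriv (by ring)
      rw [h1.deriv]
      have hxM : x ≤ M := le_trans hx.2.le htM
      have : M ^ (κ - 1) ≤ x ^ (κ - 1) :=
        Real.rpow_le_rpow_of_nonpos hx0 hxM (by linarith)
      nlinarith
  have := hmono (left_mem_Icc.2 hst) (right_mem_Icc.2 hst) hst
  simp only [hψ] at this
  linarith

lemma RO_small {G T₀ κ t : ℝ} (h0 : 0 ≤ t) (h : t ≤ T₀) :
    rambergOsgood G T₀ κ (t ^ 2) = 1 / G := by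
  have : t ^ 2 ≤ T₀ ^ 2 := by nlinarith
  simp [rambergOsgood, this]

lemma RO_large {G T₀ κ t : ℝ} (hT₀ : 0 < T₀) (h : T₀ ≤ t) :
    rambergOsgood G T₀ κ (t ^ 2) * t = (1 / G) * (T₀ * (t / T₀) ^ κ) := by
  have ht : 0 < t := lt_of_lt_of_le hT₀ h
  have hu : (1:ℝ) ≤ t / T₀ := (one_le_div hT₀).2 h
  have hu0 : (0:ℝ) < t / T₀ := by linarith
  rcases eq_or_lt_of_le h with h' | h'
  · subst h'
    rw [RO_small hT₀.le le_rfl, div_self hT₀.ne', Real.one_rpow, mul_one]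
  · have hsq : ¬ (t ^ 2 ≤ T₀ ^ 2) := by nlinarith
    rw [rambergOsgood, if_neg hsq]
    have e1 : t ^ 2 / T₀ ^ 2 = (t / T₀) ^ 2 := by ring
    rw [e1]
    rw [← Real.rpow_natCast (t / T₀) 2, ← Real.rpow_mul hu0.le]
    have e2 : ((2:ℕ):ℝ) * ((κ - 1) / 2) = κ - 1 := by push_cast; ring
    rw [e2]
    have e3 : (t / T₀) ^ (κ - 1) * t = T₀ * (t / T₀) ^ κ := by
      have : (t / T₀) ^ κ = (t / T₀) ^ (κ - 1) * (t / T₀) := by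
        rw [← Real.rpow_add_one hu0.ne']; ring_nf
      rw [this]
      field_simp
    rw [mul_assoc, e3]

lemma RO_slope {G T₀ κ Tstar : ℝ}
    (hG : 0 < G) (hT₀ : 0 < T₀) (hκ : κ ∈ Set.Ioo (0 : ℝ) 1) (hTstar : T₀ ≤ Tstar)
    {S T : ℝ} (hS0 : 0 ≤ S) (hST : S ≤ T) (hT : T ≤ Tstar) :
    (κ / G) * (Tstar / T₀) ^ (κ - 1) * (T - S)
      ≤ rambergOsgood G T₀ κ (T ^ 2) * T - rambergOsgood G T₀ κ (S ^ 2) * S := by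
  obtain ⟨hκ0, hκ1⟩ := hκ
  have hM1 : (1:ℝ) ≤ Tstar / T₀ := (one_le_div hT₀).2 hTstar
  have hr0 : (0:ℝ) ≤ (Tstar / T₀) ^ (κ - 1) := Real.rpow_nonneg (by linarith) _
  have hr1 : (Tstar / T₀) ^ (κ - 1) ≤ 1 :=
    Real.rpow_le_one_of_one_le_of_nonpos hM1 (by linarith)
  -- case split helper for the "both ≥ T₀" regime
  have large : ∀ s t : ℝ, T₀ ≤ s → s ≤ t → t ≤ Tstar →
      (κ / G) * (Tstar / T₀) ^ (κ - 1) * (t - s)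
        ≤ rambergOsgood G T₀ κ (t ^ 2) * t - rambergOsgood G T₀ κ (s ^ 2) * s := by
    intro s t hs hst ht
    rw [RO_large hT₀ hs, RO_large hT₀ (le_trans hs hst)]
    have hu0 : (0:ℝ) < s / T₀ := div_pos (lt_of_lt_of_le hT₀ hs) hT₀
    have hst' : s / T₀ ≤ t / T₀ := by gcongr
    have htM' : t / T₀ ≤ Tstar / T₀ := by gcongr
    have key := ramberg_rpow_gap hκ0 hκ1 (M := Tstar / T₀) hu0 hst' htM'
    have e : t / T₀ - s / T₀ = (t - s) / T₀ := by ring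
    rw [e] at key
    have h2 : κ * (Tstar / T₀) ^ (κ - 1) * ((t - s) / T₀)
        ≤ (t / T₀) ^ κ - (s / T₀) ^ κ := key
    have hGinv : (0:ℝ) < 1 / G := by positivity
    calc (κ / G) * (Tstar / T₀) ^ (κ - 1) * (t - s)
        = (1 / G) * (T₀ * (κ * (Tstar / T₀) ^ (κ - 1) * ((t - s) / T₀))) := by
          field_simp
      _ ≤ (1 / G) * (T₀ * ((t / T₀) ^ κ - (s / T₀) ^ κ)) := by
          apply mul_le_mul_of_nonneg_left _ hGinv.le
          exact mul_le_mul_of_nonneg_left h2 hT₀.le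
      _ = (1 / G) * (T₀ * (t / T₀) ^ κ) - (1 / G) * (T₀ * (s / T₀) ^ κ) := by ring
  have small : ∀ s t : ℝ, 0 ≤ s → s ≤ t → t ≤ T₀ →
      (κ / G) * (Tstar / T₀) ^ (κ - 1) * (t - s)
        ≤ rambergOsgood G T₀ κ (t ^ 2) * t - rambergOsgood G T₀ κ (s ^ 2) * s := by
    intro s t hs hst ht
    rw [RO_small hs (le_trans hst ht), RO_small (le_trans hs hst) ht]
    have hC : (κ / G) * (Tstar / T₀) ^ (κ - 1) ≤ 1 / G := by
      have h1 : (κ / G) * (Tstar / T₀) ^ (κ - 1) ≤ κ / G := by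
        calc (κ / G) * (Tstar / T₀) ^ (κ - 1) ≤ (κ / G) * 1 := by
              apply mul_le_mul_of_nonneg_left hr1 (by positivity)
          _ = κ / G := mul_one _
      have h2 : κ / G ≤ 1 / G := by gcongr
      linarith
    have ht' : 0 ≤ t - s := by linarith
    calc (κ / G) * (Tstar / T₀) ^ (κ - 1) * (t - s) ≤ (1 / G) * (t - s) :=
          mul_le_mul_of_nonneg_right hC ht'
      _ = 1 / G * t - 1 / G * s := by ring
  rcases le_or_gt T T₀ with hTs | hTl
  · exact small S T hS0 hST hTs
  · rcases le_or_gt T₀ S with hSl | hSs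
    · exact large S T hSl hST hT
    · have h1 := small S T₀ hS0 hSs.le le_rfl
      have h2 := large T₀ T le_rfl hTl.le hT
      have : (κ / G) * (Tstar / T₀) ^ (κ - 1) * (T - S)
          = (κ / G) * (Tstar / T₀) ^ (κ - 1) * (T - T₀)
            + (κ / G) * (Tstar / T₀) ^ (κ - 1) * (T₀ - S) := by ring
      rw [this]
      linarith

/-- Strong monotonicity of the Ramberg–Osgood nonlinearity on `[0, T*]` with the
explicit constant `C̃ = (κ/G)·(T*/T₀)^(κ−1)`. -/
theorem rambergOsgood_strong_monotonicity (G T₀ κ Tstar : ℝ)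
    (hG : 0 < G) (hT₀ : 0 < T₀) (hκ : κ ∈ Set.Ioo (0 : ℝ) 1) (hTstar : T₀ ≤ Tstar) :
    ∀ T ∈ Set.Icc (0 : ℝ) Tstar, ∀ S ∈ Set.Icc (0 : ℝ) Tstar,
      (rambergOsgood G T₀ κ (T ^ 2) * T - rambergOsgood G T₀ κ (S ^ 2) * S) * (T - S)
        ≥ (κ / G) * (Tstar / T₀) ^ (κ - 1) * (T - S) ^ 2 := by
  intro T hT S hS
  rcases le_total S T with h | h
  · have key := RO_slope hG hT₀ hκ hTstar hS.1 h hT.2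
    nlinarith [sub_nonneg.2 h]
  · have key := RO_slope hG hT₀ hκ hTstar hT.1 h hS.2
    nlinarith [sub_nonneg.2 h]
end

section
/- Let β ∈ (0,1), T > 0, and let v : ℝ → ℝ be continuously differentiable on [0, T]. Then for every t ∈ (0, T], the Alikhanov inequality holds: v(t) · (D^β_{0+} v)(t) ≥ (1/2) · (D^β_{0+} (v²))(t); explicitly, v(t) · ∫₀ᵗ (t−s)^{−β} v′(s) ds ≥ ∫₀ᵗ (t−s)^{−β} v(s) v′(s) ds. -/
/-! Write `k s = (t - s) ^ (-β)` and `G s = (v s - v t) ^ 2 / 2 ≥ 0`. The defect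
`v t * ∫ k v' - ∫ k v v'` is `∫ k (v t - v) v' = -∫ k G'`. On `[a, x]` with `x < t` the kernel is
smooth and nondecreasing, so integration by parts gives
`-∫ₐˣ k G' = k a G a + ∫ₐˣ k' G - k x G x ≥ -k x G x`. Since `v` is differentiable at `t`,
`k x G x = O((t - x) ^ (2 - β)) → 0` as `x → t⁻`, and continuity of the primitive finishes. -/

open Filter Topology Set MeasureTheory intervalIntegral Real

theorem integral_mul_sub_mul_deriv_ge {k k' v v' : ℝ → ℝ} {a x : ℝ} (c : ℝ) (hax : a ≤ x)
    (hk : ∀ s ∈ Icc a x, HasDerivAt k (k' s) s) (hk'int : IntervalIntegrable k' volume a x)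
    (hk'_nonneg : ∀ s ∈ Icc a x, 0 ≤ k' s) (hka : 0 ≤ k a)
    (hv : ∀ s ∈ Icc a x, HasDerivAt v (v' s) s) (hv'int : IntervalIntegrable v' volume a x) :
    -(k x * (v x - c) ^ 2) / 2 ≤ ∫ s in a..x, k s * ((c - v s) * v' s) := by
  rw [← uIcc_of_le hax] at hk hv
  have hG : ∀ s ∈ uIcc a x, HasDerivAt (fun s => (v s - c) ^ 2 / 2) ((v s - c) * v' s) s :=
    fun s hs => ((((hv s hs).sub_const c).fun_pow 2).div_const 2).congr_deriv (by push_cast; ring)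
  have hG'int : IntervalIntegrable (fun s => (v s - c) * v' s) volume a x :=
    hv'int.continuousOn_mul <| .sub (fun s hs => (hv s hs).continuousAt.continuousWithinAt)
      continuousOn_const
  have hparts := integral_mul_deriv_eq_deriv_mul hk hG hk'int hG'int
  have hrest : 0 ≤ ∫ s in a..x, k' s * ((v s - c) ^ 2 / 2) :=
    integral_nonneg hax fun s hs => mul_nonneg (hk'_nonneg s hs) (by positivity)
  have hka' : 0 ≤ k a * ((v a - c) ^ 2 / 2) := mul_nonneg hka (by positivity)
  have hneg : ∫ s in a..x, k s * ((c - v s) * v' s) = -∫ s in a..x, k s * ((v s - c) * v' s) := by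
    rw [← intervalIntegral.integral_neg]; congr 1; ext s; ring
  rw [hneg, hparts]
  linarith

theorem hasDerivAt_const_sub_rpow_neg {t s : ℝ} (β : ℝ) (hs : s < t) :
    HasDerivAt (fun s => (t - s) ^ (-β)) (β * (t - s) ^ (-β - 1)) s := by
  have := ((hasDerivAt_id s).const_sub t).rpow_const (p := -β) (Or.inl (sub_pos.2 hs).ne')
  exact this.congr_deriv (by simp only [id]; ring)

theorem intervalIntegrable_const_sub_rpow_neg {β : ℝ} (hβ : β < 1) (a t : ℝ) :
    IntervalIntegrable (fun s => (t - s) ^ (-β)) volume a t := by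
  simpa using ((intervalIntegrable_rpow' (r := -β) (by linarith)).comp_sub_left t
    (a := 0) (b := t - a)).symm

theorem tendsto_const_sub_rpow_neg_mul_sq_sub_nhdsLT {v : ℝ → ℝ} {d t β : ℝ}
    (hv : HasDerivAt v d t) (hβ : β < 2) :
    Tendsto (fun x => (t - x) ^ (-β) * (v x - v t) ^ 2) (𝓝[<] t) (𝓝 0) := by
  have hpow : Tendsto (fun x => (t - x) ^ (2 - β)) (𝓝[<] t) (𝓝 0) := by
    have : Continuous fun x : ℝ => (t - x) ^ (2 - β) :=
      (continuous_const.sub continuous_id).rpow_const fun _ => Or.inr (by linarith)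
    simpa [zero_rpow (by linarith : (2 : ℝ) - β ≠ 0)] using
      (this.tendsto t).mono_left nhdsWithin_le_nhds
  have hslope : Tendsto (slope v t) (𝓝[<] t) (𝓝 d) :=
    hv.tendsto_slope.mono_left (nhdsWithin_mono _ fun x hx => ne_of_lt hx)
  have := hpow.mul (hslope.pow 2)
  rw [zero_mul] at this
  refine this.congr' ?_
  filter_upwards [self_mem_nhdsWithin] with x (hx : x < t)
  have htx : 0 < t - x := sub_pos.2 hx
  rw [slope_def_field, rpow_sub htx, rpow_two, div_pow, ← neg_sub t x, neg_sq,
    rpow_neg htx.le]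
  field_simp

theorem integral_const_sub_rpow_neg_mul_sub_mul_deriv_nonneg {v v' : ℝ → ℝ} {a t β : ℝ}
    (hat : a < t) (hβ0 : 0 ≤ β) (hβ1 : β < 1) (hv : ∀ s ∈ Icc a t, HasDerivAt v (v' s) s)
    (hv' : ContinuousOn v' (Icc a t)) :
    0 ≤ ∫ s in a..t, (t - s) ^ (-β) * ((v t - v s) * v' s) := by
  have hvc : ContinuousOn v (Icc a t) := fun s hs => (hv s hs).continuousAt.continuousWithinAt
  have hint : IntervalIntegrable (fun s => (t - s) ^ (-β) * ((v t - v s) * v' s)) volume a t :=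
    (intervalIntegrable_const_sub_rpow_neg hβ1 a t).mul_continuousOn <| by
      rw [uIcc_of_le hat.le]; exact (continuousOn_const.sub hvc).mul hv'
  have hcont : Tendsto (fun x => ∫ s in a..x, (t - s) ^ (-β) * ((v t - v s) * v' s))
      (𝓝[<] t) (𝓝 (∫ s in a..t, (t - s) ^ (-β) * ((v t - v s) * v' s))) := by
    have := continuousOn_primitive_interval' hint left_mem_uIcc t right_mem_uIcc
    rw [uIcc_of_le hat.le] at this
    simpa only [nhdsWithin_Ioo_eq_nhdsLT hat] using (this.mono Ioo_subset_Icc_self).tendsto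
  have hlow : ∀ x ∈ Ioo a t, -((t - x) ^ (-β) * (v x - v t) ^ 2) / 2 ≤
      ∫ s in a..x, (t - s) ^ (-β) * ((v t - v s) * v' s) := by
    intro x ⟨hax, hxt⟩
    have hsub : Icc a x ⊆ Icc a t := Icc_subset_Icc_right hxt.le
    have hk'int : IntervalIntegrable (fun s => β * (t - s) ^ (-β - 1)) volume a x :=
      ContinuousOn.intervalIntegrable_of_Icc hax.le <| continuousOn_const.mul <|
        (continuousOn_const.sub continuousOn_id).rpow_const
          fun s hs => Or.inl (sub_ne_zero.2 (hs.2.trans_lt hxt).ne')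
    exact integral_mul_sub_mul_deriv_ge (v t) hax.le
      (fun s hs => hasDerivAt_const_sub_rpow_neg β (hs.2.trans_lt hxt)) hk'int
      (fun s hs => mul_nonneg hβ0 (rpow_nonneg (by linarith [hs.2]) _))
      (rpow_nonneg (by linarith) _) (fun s hs => hv s (hsub hs))
      ((hv'.mono hsub).intervalIntegrable_of_Icc hax.le)
  have hlim := ((tendsto_const_sub_rpow_neg_mul_sq_sub_nhdsLT (hv t ⟨hat.le, le_rfl⟩)
    (by linarith)).neg.div_const 2)
  rw [neg_zero, zero_div] at hlim
  exact le_of_tendsto_of_tendsto hlim hcont (eventually_of_mem (Ioo_mem_nhdsLT hat) hlow)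

theorem integral_const_sub_rpow_neg_mul_mul_deriv_le {v v' : ℝ → ℝ} {a t β : ℝ}
    (hat : a < t) (hβ0 : 0 ≤ β) (hβ1 : β < 1) (hv : ∀ s ∈ Icc a t, HasDerivAt v (v' s) s)
    (hv' : ContinuousOn v' (Icc a t)) :
    ∫ s in a..t, (t - s) ^ (-β) * (v s * v' s) ≤ v t * ∫ s in a..t, (t - s) ^ (-β) * v' s := by
  have hvc : ContinuousOn v (Icc a t) := fun s hs => (hv s hs).continuousAt.continuousWithinAt
  have hk := intervalIntegrable_const_sub_rpow_neg hβ1 a t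
  rw [← uIcc_of_le hat.le] at hvc hv'
  have hsplit : ∫ s in a..t, (t - s) ^ (-β) * ((v t - v s) * v' s) =
      v t * (∫ s in a..t, (t - s) ^ (-β) * v' s) - ∫ s in a..t, (t - s) ^ (-β) * (v s * v' s) := by
    rw [← intervalIntegral.integral_const_mul,
      ← intervalIntegral.integral_sub ((hk.mul_continuousOn hv').const_mul _)
        (hk.mul_continuousOn (g := fun s => v s * v' s) (hvc.mul hv'))]
    congr 1; ext s; ring
  rw [uIcc_of_le hat.le] at hvc hv'
  have hdefect := integral_const_sub_rpow_neg_mul_sub_mul_deriv_nonneg hat hβ0 hβ1 hv hv'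
  rw [hsplit] at hdefect
  linarith

theorem alikhanov_inequality_general (β T : ℝ) (hβ : β ∈ Set.Ioo (0 : ℝ) 1)
    (v v' : ℝ → ℝ)
    (hv : ∀ s ∈ Set.Icc (0 : ℝ) T, HasDerivAt v (v' s) s)
    (hv' : ContinuousOn v' (Set.Icc 0 T)) :
    ∀ t ∈ Set.Ioc (0 : ℝ) T,
      (v t * ((1 / Real.Gamma (1 - β)) * ∫ s in (0 : ℝ)..t, (t - s) ^ (-β) * v' s)
        ≥ (1 / 2) *
          ((1 / Real.Gamma (1 - β)) *
            ∫ s in (0 : ℝ)..t, (t - s) ^ (-β) * (2 * v s * v' s))) ∧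
      (v t * ∫ s in (0 : ℝ)..t, (t - s) ^ (-β) * v' s
        ≥ ∫ s in (0 : ℝ)..t, (t - s) ^ (-β) * (v s * v' s)) := by
  rintro t ⟨ht0, htT⟩
  have hsub : Icc 0 t ⊆ Icc 0 T := Icc_subset_Icc_right htT
  have key := integral_const_sub_rpow_neg_mul_mul_deriv_le ht0 hβ.1.le hβ.2
    (fun s hs => hv s (hsub hs)) (hv'.mono hsub)
  refine ⟨?_, key⟩
  have hdouble : ∫ s in (0 : ℝ)..t, (t - s) ^ (-β) * (2 * v s * v' s) =
      2 * ∫ s in (0 : ℝ)..t, (t - s) ^ (-β) * (v s * v' s) := by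
    rw [← intervalIntegral.integral_const_mul]; congr 1; ext s; ring
  have hΓ : 0 ≤ 1 / Gamma (1 - β) := (one_div_pos.2 (Gamma_pos_of_pos (by linarith [hβ.2]))).le
  rw [hdouble]
  linarith [mul_le_mul_of_nonneg_left key hΓ]

/-- The Alikhanov inequality: for `β ∈ (0,1)` and `v` continuously differentiable on
`[0,T]`, one has `v(t)·(D^β_{0+} v)(t) ≥ ½·(D^β_{0+}(v²))(t)` for every `t ∈ (0,T]`;
explicitly, `v(t)·∫₀ᵗ (t−s)^{−β} v′(s) ds ≥ ∫₀ᵗ (t−s)^{−β} v(s) v′(s) ds`. -/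
theorem alikhanov_inequality (β T : ℝ) (hβ : β ∈ Set.Ioo (0 : ℝ) 1) (hT : 0 < T)
    (v v' : ℝ → ℝ)
    (hv : ∀ s ∈ Set.Icc (0 : ℝ) T, HasDerivAt v (v' s) s)
    (hv' : ContinuousOn v' (Set.Icc 0 T)) :
    ∀ t ∈ Set.Ioc (0 : ℝ) T,
      (v t * ((1 / Real.Gamma (1 - β)) * ∫ s in (0 : ℝ)..t, (t - s) ^ (-β) * v' s)
        ≥ (1 / 2) *
          ((1 / Real.Gamma (1 - β)) *
            ∫ s in (0 : ℝ)..t, (t - s) ^ (-β) * (2 * v s * v' s))) ∧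
      (v t * ∫ s in (0 : ℝ)..t, (t - s) ^ (-β) * v' s
        ≥ ∫ s in (0 : ℝ)..t, (t - s) ^ (-β) * (v s * v' s)) :=
  alikhanov_inequality_general β T hβ v v' hv hv'
end

section
/- Let β ∈ (0,1), a < b, and let u, v : ℝ → ℝ be continuously differentiable on [a, b] with u(a) = 0 and v(b) = 0. Then the fractional integration-by-parts formula holds: ∫ₐᵇ (D^β_{a+} u)(t) · v(t) dt = ∫ₐᵇ u(t) · (D^β_{b−} v)(t) dt. -/
open intervalIntegral Real MeasureTheory Set Function

/-!
Both sides are integrals of the kernel `s ^ (-β)` against the lag `s = |t - τ|`. Substituting the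
lag and exchanging the order of integration over a triangle turns the left side into
`∫₀^{b-a} s ^ (-β) C_{u',v}(s) ds` and the right side into `-∫₀^{b-a} s ^ (-β) C_{u,v'}(s) ds`,
where `C_{φ,ψ}(s) = ∫ₐ^{b-s} φ x ψ (x + s) dx`. For every fixed lag, ordinary integration by parts,
whose boundary terms vanish because `u a = 0` and `v b = 0`, gives `C_{u',v}(s) = -C_{u,v'}(s)`.
Fubini applies because `s ^ (-β)` is integrable for `β < 1` and the remaining factors are
continuous on the compact triangle.
-/

theorem intervalIntegral_intervalIntegral_swap_triangle {E : Type*} [NormedAddCommGroup E]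
    [NormedSpace ℝ E] {a b : ℝ} {f : ℝ → ℝ → E} (hab : a ≤ b)
    (hf : IntegrableOn (uncurry f) (Icc a b ×ˢ Icc a b ∩ {p | p.2 ≤ p.1})) :
    ∫ x in a..b, ∫ y in a..x, f x y = ∫ y in a..b, ∫ x in y..b, f x y := by
  -- With a strict inequality the slices `{x | y < x} ∩ Ioc a b` are exactly `Ioc y b`.
  set S : Set (ℝ × ℝ) := {p | p.2 < p.1}
  have hS : MeasurableSet S := measurableSet_lt measurable_snd measurable_fst
  have hlower : ∀ x ∈ uIcc a b,
      ∫ y in a..x, f x y = ∫ y in a..b, S.indicator (uncurry f) (x, y) := by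
    intro x hx
    rw [uIcc_of_le hab] at hx
    have hslice : (fun y => S.indicator (uncurry f) (x, y)) = (Iio x).indicator (f x) := by
      ext y; simp [S, indicator_apply]
    rw [hslice, integral_of_le hab, integral_of_le hx.1,
      MeasureTheory.integral_indicator measurableSet_Iio,
      Measure.restrict_restrict measurableSet_Iio, integral_Ioc_eq_integral_Ioo]
    congr 2
    ext y
    simp only [mem_inter_iff, mem_Iio, mem_Ioc, mem_Ioo]
    exact ⟨fun ⟨hay, hyx⟩ => ⟨hyx, hay, hyx.le.trans hx.2⟩, fun ⟨hyx, hay, _⟩ => ⟨hay, hyx⟩⟩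
  have hupper : ∀ y ∈ uIcc a b,
      ∫ x in y..b, f x y = ∫ x in a..b, S.indicator (uncurry f) (x, y) := by
    intro y hy
    rw [uIcc_of_le hab] at hy
    have hslice : (fun x => S.indicator (uncurry f) (x, y)) = (Ioi y).indicator (f · y) := by
      ext x; simp [S, indicator_apply]
    rw [hslice, integral_of_le hab, integral_of_le hy.2,
      MeasureTheory.integral_indicator measurableSet_Ioi,
      Measure.restrict_restrict measurableSet_Ioi, inter_comm, Ioc_inter_Ioi, max_eq_right hy.1]
  have hint : IntegrableOn (uncurry fun x y => S.indicator (uncurry f) (x, y))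
      (uIoc a b ×ˢ uIoc a b) := by
    refine (integrableOn_indicator_iff hS).mpr (hf.mono_set ?_)
    rintro ⟨x, y⟩ ⟨hyx, hx, hy⟩
    rw [uIoc_of_le hab] at hx hy
    exact ⟨⟨Ioc_subset_Icc_self hx, Ioc_subset_Icc_self hy⟩, le_of_lt (α := ℝ) hyx⟩
  rw [integral_congr hlower, integral_congr hupper, intervalIntegral_intervalIntegral_swap hint]

theorem intervalIntegral_rpow_mul_swap_triangle {a b β : ℝ} {g : ℝ → ℝ → ℝ} (hβ : β < 1)
    (hab : a ≤ b) (hg : ContinuousOn (uncurry g) (Icc a b ×ˢ Icc a b ∩ {p | p.2 ≤ p.1})) :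
    ∫ x in a..b, ∫ y in a..x, y ^ (-β) * g x y = ∫ y in a..b, y ^ (-β) * ∫ x in y..b, g x y := by
  have hT : IsCompact (Icc a b ×ˢ Icc a b ∩ {p : ℝ × ℝ | p.2 ≤ p.1}) :=
    (isCompact_Icc.prod isCompact_Icc).inter_right (isClosed_le continuous_snd continuous_fst)
  have hkernel : IntegrableOn (fun p : ℝ × ℝ => p.2 ^ (-β)) (Icc a b ×ˢ Icc a b) := by
    rw [IntegrableOn, Measure.volume_eq_prod, ← Measure.prod_restrict]
    exact ((intervalIntegrable_iff_integrableOn_Icc_of_le hab).mp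
      (intervalIntegrable_rpow' (by linarith))).comp_snd _
  rw [intervalIntegral_intervalIntegral_swap_triangle (f := fun x y => y ^ (-β) * g x y) hab
    ((hkernel.mono_set inter_subset_left).mul_continuousOn hg hT)]
  simp_rw [intervalIntegral.integral_const_mul]

noncomputable def intervalCorrelation (a b : ℝ) (φ ψ : ℝ → ℝ) (s : ℝ) : ℝ :=
  ∫ x in a..(b - s), φ x * ψ (x + s)

theorem intervalCorrelation_deriv_left_eq_neg {a b s : ℝ} {u u' v v' : ℝ → ℝ}
    (hs : s ∈ Icc 0 (b - a))
    (hu : ∀ t ∈ Icc a b, HasDerivAt u (u' t) t) (hu' : ContinuousOn u' (Icc a b))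
    (hv : ∀ t ∈ Icc a b, HasDerivAt v (v' t) t) (hv' : ContinuousOn v' (Icc a b))
    (hua : u a = 0) (hvb : v b = 0) :
    intervalCorrelation a b u' v s = -intervalCorrelation a b u v' s := by
  have hsub : uIcc a (b - s) ⊆ Icc a b := by
    rw [uIcc_of_le (by linarith [hs.2])]
    exact Icc_subset_Icc le_rfl (by linarith [hs.1])
  have hshift : MapsTo (· + s) (uIcc a (b - s)) (Icc a b) := by
    intro x hx
    rw [uIcc_of_le (by linarith [hs.2])] at hx
    constructor <;> linarith [hx.1, hx.2, hs.1]
  have hparts := integral_mul_deriv_eq_deriv_mul (fun x hx => hu x (hsub hx))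
    (fun x hx => (hv (x + s) (hshift hx)).comp_add_const x s)
    (hu'.mono hsub).intervalIntegrable
    (hv'.comp (continuous_add_const s).continuousOn hshift).intervalIntegrable
  rw [sub_add_cancel, hvb, hua] at hparts
  simp only [intervalCorrelation, hparts, mul_zero, zero_mul, sub_zero, zero_sub, neg_neg]

theorem integral_integral_sub_rpow_mul_mul {a b β : ℝ} {φ ψ : ℝ → ℝ} (hβ : β < 1) (hab : a ≤ b)
    (hφ : ContinuousOn φ (Icc a b)) (hψ : ContinuousOn ψ (Icc a b)) :
    ∫ t in a..b, (∫ τ in a..t, (t - τ) ^ (-β) * φ τ) * ψ t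
      = ∫ s in 0..(b - a), s ^ (-β) * intervalCorrelation a b φ ψ s := by
  have hg : ContinuousOn (uncurry fun r s => φ (a + r - s) * ψ (a + r))
      (Icc 0 (b - a) ×ˢ Icc 0 (b - a) ∩ {p | p.2 ≤ p.1}) := by
    refine (hφ.comp (by fun_prop) ?_).mul (hψ.comp (by fun_prop) ?_) <;>
    · rintro ⟨r, s⟩ ⟨⟨⟨hr0, hr⟩, ⟨hs0, hs⟩⟩, hsr⟩
      simp only [mem_ofPred_eq] at hsr
      constructor <;> linarith
  calc ∫ t in a..b, (∫ τ in a..t, (t - τ) ^ (-β) * φ τ) * ψ t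
      = ∫ r in 0..(b - a), (∫ τ in a..(a + r), (a + r - τ) ^ (-β) * φ τ) * ψ (a + r) := by
        rw [integral_comp_add_left (fun t => (∫ τ in a..t, (t - τ) ^ (-β) * φ τ) * ψ t)]
        simp
    _ = ∫ r in 0..(b - a), ∫ s in 0..r, s ^ (-β) * (φ (a + r - s) * ψ (a + r)) := by
        refine integral_congr fun r _ => ?_
        have h := integral_comp_sub_left (fun τ => (a + r - τ) ^ (-β) * φ τ) (a + r)
          (a := 0) (b := r)
        simp only [sub_sub_cancel, add_sub_cancel_right, sub_zero] at h
        rw [← h, ← intervalIntegral.integral_mul_const]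
        simp only [mul_assoc]
    _ = ∫ s in 0..(b - a), s ^ (-β) * ∫ r in s..(b - a), φ (a + r - s) * ψ (a + r) :=
        intervalIntegral_rpow_mul_swap_triangle hβ (by linarith) hg
    _ = ∫ s in 0..(b - a), s ^ (-β) * intervalCorrelation a b φ ψ s := by
        refine integral_congr fun s _ => ?_
        have h := integral_comp_add_right (fun x => φ x * ψ (x + s)) (a - s) (a := s) (b := b - a)
        rw [show s + (a - s) = a by ring, show b - a + (a - s) = b - s by ring] at h
        rw [intervalCorrelation, ← h]
        congr 1
        exact integral_congr fun r _ => by ring_nf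

theorem integral_mul_integral_sub_rpow {a b β : ℝ} {φ ψ : ℝ → ℝ} (hβ : β < 1) (hab : a ≤ b)
    (hφ : ContinuousOn φ (Icc a b)) (hψ : ContinuousOn ψ (Icc a b)) :
    ∫ t in a..b, φ t * ∫ τ in t..b, (τ - t) ^ (-β) * ψ τ
      = ∫ s in 0..(b - a), s ^ (-β) * intervalCorrelation a b φ ψ s := by
  have hg : ContinuousOn (uncurry fun r s => φ (b - r) * ψ (b - r + s))
      (Icc 0 (b - a) ×ˢ Icc 0 (b - a) ∩ {p | p.2 ≤ p.1}) := by
    refine (hφ.comp (by fun_prop) ?_).mul (hψ.comp (by fun_prop) ?_) <;>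
    · rintro ⟨r, s⟩ ⟨⟨⟨hr0, hr⟩, ⟨hs0, hs⟩⟩, hsr⟩
      simp only [mem_ofPred_eq] at hsr
      constructor <;> linarith
  calc ∫ t in a..b, φ t * ∫ τ in t..b, (τ - t) ^ (-β) * ψ τ
      = ∫ r in 0..(b - a), φ (b - r) * ∫ τ in (b - r)..b, (τ - (b - r)) ^ (-β) * ψ τ := by
        rw [integral_comp_sub_left (fun t => φ t * ∫ τ in t..b, (τ - t) ^ (-β) * ψ τ)]
        simp
    _ = ∫ r in 0..(b - a), ∫ s in 0..r, s ^ (-β) * (φ (b - r) * ψ (b - r + s)) := by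
        refine integral_congr fun r _ => ?_
        have h := integral_comp_add_right (fun τ => (τ - (b - r)) ^ (-β) * ψ τ) (b - r)
          (a := 0) (b := r)
        rw [zero_add, add_sub_cancel] at h
        rw [← h, ← intervalIntegral.integral_const_mul]
        exact integral_congr fun s _ => by ring_nf
    _ = ∫ s in 0..(b - a), s ^ (-β) * ∫ r in s..(b - a), φ (b - r) * ψ (b - r + s) :=
        intervalIntegral_rpow_mul_swap_triangle hβ (by linarith) hg
    _ = ∫ s in 0..(b - a), s ^ (-β) * intervalCorrelation a b φ ψ s := by
        refine integral_congr fun s _ => ?_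
        have h := integral_comp_sub_left (fun x => φ x * ψ (x + s)) b (a := s) (b := b - a)
        rw [sub_sub_cancel] at h
        rw [intervalCorrelation, ← h]

/-- Fractional integration by parts: for `β ∈ (0,1)` and `u, v` continuously
differentiable on `[a,b]` with `u(a) = 0` and `v(b) = 0`,
`∫ₐᵇ (D^β_{a+} u)(t)·v(t) dt = ∫ₐᵇ u(t)·(D^β_{b−} v)(t) dt`, where
`(D^β_{a+} u)(t) = (1/Γ(1−β)) ∫ₐᵗ (t−τ)^{−β} u′(τ) dτ` and
`(D^β_{b−} v)(t) = −(1/Γ(1−β)) ∫ₜᵇ (τ−t)^{−β} v′(τ) dτ`. -/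
theorem fractional_integration_by_parts (β a b : ℝ)
    (hβ : β ∈ Set.Ioo (0 : ℝ) 1) (hab : a < b)
    (u u' v v' : ℝ → ℝ)
    (hu : ∀ t ∈ Set.Icc a b, HasDerivAt u (u' t) t)
    (hu' : ContinuousOn u' (Set.Icc a b))
    (hv : ∀ t ∈ Set.Icc a b, HasDerivAt v (v' t) t)
    (hv' : ContinuousOn v' (Set.Icc a b))
    (hua : u a = 0) (hvb : v b = 0) :
    ∫ t in a..b,
        ((1 / Real.Gamma (1 - β)) * ∫ τ in a..t, (t - τ) ^ (-β) * u' τ) * v t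
      = ∫ t in a..b,
          u t * (-(1 / Real.Gamma (1 - β)) * ∫ τ in t..b, (τ - t) ^ (-β) * v' τ) := by
  set c := 1 / Real.Gamma (1 - β)
  have hcu : ContinuousOn u (Icc a b) := fun t ht => (hu t ht).continuousAt.continuousWithinAt
  have hcv : ContinuousOn v (Icc a b) := fun t ht => (hv t ht).continuousAt.continuousWithinAt
  have hcorr : ∀ s ∈ uIcc 0 (b - a), s ^ (-β) * intervalCorrelation a b u' v s
      = -(s ^ (-β) * intervalCorrelation a b u v' s) := fun s hs => by
    rw [uIcc_of_le (by linarith)] at hs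
    rw [intervalCorrelation_deriv_left_eq_neg hs hu hu' hv hv' hua hvb, mul_neg]
  calc ∫ t in a..b, (c * ∫ τ in a..t, (t - τ) ^ (-β) * u' τ) * v t
      = c * ∫ t in a..b, (∫ τ in a..t, (t - τ) ^ (-β) * u' τ) * v t := by
        rw [← intervalIntegral.integral_const_mul]
        exact integral_congr fun t _ => by ring
    _ = -c * ∫ t in a..b, u t * ∫ τ in t..b, (τ - t) ^ (-β) * v' τ := by
        rw [integral_integral_sub_rpow_mul_mul hβ.2 hab.le hu' hcv,
          integral_mul_integral_sub_rpow hβ.2 hab.le hcu hv', integral_congr hcorr,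
          intervalIntegral.integral_neg]
        ring
    _ = ∫ t in a..b, u t * (-c * ∫ τ in t..b, (τ - t) ^ (-β) * v' τ) := by
        rw [← intervalIntegral.integral_const_mul]
        exact integral_congr fun t _ => by ring
end

section
/- Let (a_k)_{k≥0} and (b_k)_{k≥0} be sequences of positive real numbers, let k₀ ∈ ℕ and M > 0, and suppose that a_k ≥ M for all k ≥ k₀ and that b_k²/a_k⁴ = 1/a_k² + b_{k−1}²/a_{k−1}⁴ for all k > k₀. Then the series ∑_{k≥0} a_k⁴/b_k² diverges to infinity. -/
open Filter Topology

/-- Divergence lemma in the convergence proof of the conjugate gradient method: if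
`a_k ≥ M > 0` for `k ≥ k₀` and `b_k²/a_k⁴ = 1/a_k² + b_{k−1}²/a_{k−1}⁴` for `k > k₀`,
then the series `∑ a_k⁴/b_k²` diverges to infinity. -/
theorem cgm_divergence_lemma
    (a b : ℕ → ℝ) (ha : ∀ k, 0 < a k) (hb : ∀ k, 0 < b k)
    (k₀ : ℕ) (M : ℝ) (hM : 0 < M)
    (hbound : ∀ k, k₀ ≤ k → M ≤ a k)
    (hrec : ∀ k, k₀ < k →
      b k ^ 2 / a k ^ 4 = 1 / a k ^ 2 + b (k - 1) ^ 2 / a (k - 1) ^ 4) :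
    Tendsto (fun n => ∑ k ∈ Finset.range n, a k ^ 4 / b k ^ 2) atTop atTop := by
  set f : ℕ → ℝ := fun k => a k ^ 4 / b k ^ 2 with hf
  have hfpos : ∀ k, 0 < f k := fun k =>
    div_pos (pow_pos (ha k) 4) (pow_pos (hb k) 2)
  rw [← not_summable_iff_tendsto_nat_atTop_of_nonneg (fun k => (hfpos k).le)]
  intro hsum
  -- c k := b k ^ 2 / a k ^ 4 satisfies c k ≤ c k₀ + (k - k₀)/M²
  set c : ℕ → ℝ := fun k => b k ^ 2 / a k ^ 4 with hc
  have hcpos : ∀ k, 0 < c k := fun k =>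
    div_pos (pow_pos (hb k) 2) (pow_pos (ha k) 4)
  have key : ∀ k, k₀ ≤ k → c k ≤ c k₀ + ((k - k₀ : ℕ) : ℝ) / M ^ 2 := by
    intro k hk
    induction k, hk using Nat.le_induction with
    | base => simp
    | succ n hn ih =>
      have h1 : c (n + 1) = 1 / a (n + 1) ^ 2 + c n := by
        have := hrec (n + 1) (Nat.lt_succ_of_le hn)
        simpa using this
      have h2 : 1 / a (n + 1) ^ 2 ≤ 1 / M ^ 2 := by
        apply one_div_le_one_div_of_le (pow_pos hM 2)
        exact pow_le_pow_left₀ hM.le (hbound (n + 1) (Nat.le_succ_of_le hn)) 2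
      have h3 : ((n + 1 - k₀ : ℕ) : ℝ) = ((n - k₀ : ℕ) : ℝ) + 1 := by
        rw [Nat.succ_sub hn]; push_cast; ring
      rw [h1, h3]
      calc 1 / a (n + 1) ^ 2 + c n ≤ 1 / M ^ 2 + (c k₀ + ((n - k₀ : ℕ) : ℝ) / M ^ 2) :=
            add_le_add h2 ih
        _ = c k₀ + (((n - k₀ : ℕ) : ℝ) + 1) / M ^ 2 := by ring
  set C : ℝ := c k₀ + 1 / M ^ 2 with hC
  have hCpos : 0 < C := add_pos (hcpos k₀) (one_div_pos.mpr (pow_pos hM 2))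
  -- f k ≥ 1 / (C * (k + 1)) for k ≥ k₀
  have hlow : ∀ k, k₀ ≤ k → 1 / (C * (k + 1)) ≤ f k := by
    intro k hk
    have h1 : c k ≤ C * (k + 1) := by
      calc c k ≤ c k₀ + ((k - k₀ : ℕ) : ℝ) / M ^ 2 := key k hk
        _ ≤ c k₀ + (k : ℝ) / M ^ 2 := by
            gcongr
            exact_mod_cast Nat.sub_le k k₀
        _ ≤ C * (k + 1) := by
            rw [hC]
            have hk0 : (0:ℝ) ≤ (k : ℝ) := Nat.cast_nonneg k
            have h2 : (0:ℝ) < 1 / M ^ 2 := one_div_pos.mpr (pow_pos hM 2)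
            have h3 : (k:ℝ)/M^2 = (k:ℝ)*(1/M^2) := by ring
            nlinarith [mul_nonneg (hcpos k₀).le hk0, mul_nonneg h2.le hk0]
    have hfk : f k = 1 / c k := by
      rw [hc, hf]
      field_simp
    rw [hfk]
    exact one_div_le_one_div_of_le (hcpos k) h1
  -- so the shifted comparison sequence is summable, contradiction
  have hs1 : Summable (fun k => f (k + k₀)) := (summable_nat_add_iff k₀).mpr hsum
  have hs2 : Summable (fun k : ℕ => 1 / (C * ((k + k₀ : ℕ) + 1))) := by
    apply Summable.of_nonneg_of_le (fun k => by positivity) _ hs1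
    intro k
    exact_mod_cast hlow (k + k₀) (Nat.le_add_left k₀ k)
  have hs3 : Summable (fun k : ℕ => 1 / (((k + k₀ : ℕ) : ℝ) + 1)) := by
    refine (hs2.mul_left C).congr fun k => ?_
    have hx : (0:ℝ) < ((k + k₀ : ℕ) : ℝ) + 1 := by positivity
    field_simp
  have hs4 : Summable (fun k : ℕ => 1 / ((k : ℝ) + 1)) :=
    (summable_nat_add_iff k₀).mp hs3
  have hs5 : Summable (fun k : ℕ => 1 / ((((k + 1 : ℕ)) : ℝ))) :=
    hs4.congr fun k => by push_cast; ring
  exact Real.not_summable_one_div_natCast ((summable_nat_add_iff 1).mp hs5)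
end
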